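/- In the space 𝒢_3, the set of graphs of infinite rank is a dense G_δ set. -/

import Mathlib

open TopologicalSpace

/-- A based (multi)graph with vertex set `ℕ` and edge set `ℕ`: each edge is an
unordered pair of vertices (self-loops and multiple edges allowed), with a basepoint. -/
structure BasedGraph where
  edges : ℕ → Sym2 ℕ
  base : ℕ

namespace BasedGraph

/-- Two vertices are adjacent if some edge joins them. -/
def Adj (G : BasedGraph) (u v : ℕ) : Prop := ∃ e : ℕ, G.edges e = s(u, v)

/-- There is a walk of length `n` from `u` to `v`. -/
def ReachesIn (G : BasedGraph) (n u v : ℕ) : Prop :=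
  ∃ f : ℕ → ℕ, f 0 = u ∧ f n = v ∧ ∀ i < n, G.Adj (f i) (f (i + 1))

/-- Connectedness: every pair of vertices is joined by a walk. -/
def Connected (G : BasedGraph) : Prop := ∀ u v : ℕ, ∃ n, G.ReachesIn n u v

/-- Local finiteness: each vertex meets only finitely many edges. -/
def LocallyFinite (G : BasedGraph) : Prop := ∀ v : ℕ, {e : ℕ | v ∈ G.edges e}.Finite

/-- Degree of a vertex: incident edges, with self-loops counted twice. -/
noncomputable def degree (G : BasedGraph) (v : ℕ) : ℕ :=
  {e : ℕ | v ∈ G.edges e}.ncard + {e : ℕ | G.edges e = s(v, v)}.ncard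

/-- `k`-regular: locally finite with every vertex of degree exactly `k`. -/
def Regular (G : BasedGraph) (k : ℕ) : Prop := G.LocallyFinite ∧ ∀ v, G.degree v = k

/-- Path metric distance (length of a shortest walk). -/
noncomputable def dist (G : BasedGraph) (u v : ℕ) : ℕ := sInf {n | G.ReachesIn n u v}

/-- Vertices of the ball of radius `r` around the basepoint. -/
def ballV (G : BasedGraph) (r : ℕ) : Set ℕ := {v | G.dist G.base v ≤ r}

/-- Edges of the ball of radius `r`: both endpoints lie in the vertex ball. -/
def ballE (G : BasedGraph) (r : ℕ) : Set ℕ := {e | ∀ v ∈ G.edges e, v ∈ G.ballV r}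

/-- The balls of radius `r` around the basepoints of `G₁`, `G₂` are isomorphic
as based graphs. -/
def BallIso (r : ℕ) (G₁ G₂ : BasedGraph) : Prop :=
  ∃ (σ : G₁.ballV r ≃ G₂.ballV r) (τ : G₁.ballE r ≃ G₂.ballE r),
    (∀ h₁ : G₁.base ∈ G₁.ballV r, (σ ⟨G₁.base, h₁⟩ : ℕ) = G₂.base) ∧
    ∀ (e : G₁.ballE r) (u v : ℕ) (hu : u ∈ G₁.ballV r) (hv : v ∈ G₁.ballV r),
      G₁.edges ↑e = s(u, v) →
        G₂.edges ↑(τ e) = s((σ ⟨u, hu⟩ : ℕ), (σ ⟨v, hv⟩ : ℕ))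

/-- Based isomorphism of graphs. -/
def Iso (G₁ G₂ : BasedGraph) : Prop :=
  ∃ (σ : ℕ ≃ ℕ) (τ : ℕ ≃ ℕ), σ G₁.base = G₂.base ∧
    ∀ e : ℕ, G₂.edges (τ e) = Sym2.map σ (G₁.edges e)

/-- `d(Γ₁,Γ₂) = inf { 2^{-r} : B_r(Γ₁) ≅ B_r(Γ₂) }` (with `1 = 2⁻⁰` as default cap). -/
noncomputable def gdist (G₁ G₂ : BasedGraph) : ℝ :=
  sInf (insert 1 {x : ℝ | ∃ r : ℕ, BallIso r G₁ G₂ ∧ x = (2 : ℝ)⁻¹ ^ r})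

/-- Reachability by a walk avoiding a set `S` of vertices. -/
def ReachAvoid (G : BasedGraph) (S : Set ℕ) (u v : ℕ) : Prop :=
  ∃ (n : ℕ) (f : ℕ → ℕ), f 0 = u ∧ f n = v ∧ (∀ i ≤ n, f i ∉ S) ∧
    ∀ i < n, G.Adj (f i) (f (i + 1))

/-- The end space of `G`: inverse limit over finite (= compact) subgraphs of the
(discrete, finite) sets of connected components of the complement; a point assigns
to each finite vertex set `S` (the characteristic function of) a connected component
of `G ∖ S`, compatibly. -/
def EndSpace (G : BasedGraph) : Type :=
  {e : Finset ℕ → ℕ → Bool //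
    (∀ S : Finset ℕ, ∃ v ∉ (S : Set ℕ), ∀ w, e S w = true ↔ G.ReachAvoid (↑S) v w) ∧
    ∀ S T : Finset ℕ, S ⊆ T → ∀ w, e T w = true → e S w = true}

instance (G : BasedGraph) : TopologicalSpace (EndSpace G) :=
  inferInstanceAs (TopologicalSpace
    {e : Finset ℕ → ℕ → Bool //
    (∀ S : Finset ℕ, ∃ v ∉ (S : Set ℕ), ∀ w, e S w = true ↔ G.ReachAvoid (↑S) v w) ∧
    ∀ S T : Finset ℕ, S ⊆ T → ∀ w, e T w = true → e S w = true})

/-- The (induced subgraph on) `A` has first Betti number (rank) at least `n`: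
some finite subgraph `(VF, EF)` inside `A` has `#EF - #VF + 1 ≥ n`. -/
def RankGe (G : BasedGraph) (A : Set ℕ) (n : ℕ) : Prop :=
  ∃ VF EF : Finset ℕ, (↑VF : Set ℕ) ⊆ A ∧
    (∀ e ∈ EF, ∀ v, v ∈ G.edges e → v ∈ VF) ∧ VF.card + n ≤ EF.card + 1

/-- An end is accumulated by loops if each of its neighborhoods has infinite rank. -/
def AccumulatedByLoops (G : BasedGraph) (e : EndSpace G) : Prop :=
  ∀ S : Finset ℕ, ∀ n : ℕ, RankGe G {w | e.1 S w = true} n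

/-- One-ended: the end space is a single point. -/
def OneEnded (G : BasedGraph) : Prop :=
  Nonempty (EndSpace G) ∧ ∀ e₁ e₂ : EndSpace G, e₁ = e₂

/-- Any two vertices at distance exactly `n` from the basepoint are joined by a
path avoiding the open ball of radius `n`. -/
def OutsideConnected (G : BasedGraph) (n : ℕ) : Prop :=
  ∀ u v : ℕ, G.dist G.base u = n → G.dist G.base v = n →
    G.ReachAvoid {w | G.dist G.base w < n} u v

end BasedGraph

open BasedGraph

/-- The space `𝒢_k` of based, connected, infinite (vertex set `ℕ`), `k`-regular graphs. -/
def Gspace (k : ℕ) : Type := {G : BasedGraph // G.Connected ∧ G.Regular k}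

/-- The metric topology on `𝒢_k`, generated by the metric balls of `gdist`. -/
instance (k : ℕ) : TopologicalSpace (Gspace k) :=
  generateFrom {U | ∃ (Γ : Gspace k) (ε : ℝ), 0 < ε ∧ U = {Δ | gdist Γ.1 Δ.1 < ε}}

/-! Having rank at least `n` is witnessed by a finite subgraph, which lies in some ball around the
basepoint, so it is an open condition and infinite rank is a countable intersection of open sets.

For density, given `Γ` and `R`, keep the edges of `Γ` meeting its `R`-ball, move the outer end of
each edge leaving the ball to the start of a new ray of alternating double and single edges, and
build these rays on the remaining vertices and edges of `Γ`. The result is connected, `3`-regular,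
and has infinitely many independent cycles (the double edges). The new edges leave the ball and
touch it only at distance `R`, so distances from the basepoint within the ball do not change and
the balls of radius `r ≤ R` are those of `Γ`. -/

theorem Sym2.finite_setOf_mem {α : Type*} (z : Sym2 α) : {a | a ∈ z}.Finite := by
  classical
  exact z.toFinset.finite_toSet.subset fun _ => Sym2.mem_toFinset.2

universe u

theorem nonempty_equiv_prod_nat (α β : Type u) [Countable α] [Infinite α] [Countable β]
    [Nonempty β] : Nonempty (α ≃ β × ℕ) :=
  Cardinal.eq.1 ((Cardinal.mk_eq_aleph0 _).trans (Cardinal.mk_eq_aleph0 _).symm)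

namespace BasedGraph

variable {G Δ : BasedGraph} {R : ℕ}

theorem Adj.symm {u v : ℕ} (h : G.Adj u v) : G.Adj v u :=
  let ⟨e, he⟩ := h
  ⟨e, he.trans Sym2.eq_swap⟩

theorem adj_of_mem_edges {e u v : ℕ} (hu : u ∈ G.edges e) (hv : v ∈ G.edges e) (huv : u ≠ v) :
    G.Adj u v :=
  ⟨e, (Sym2.mem_and_mem_iff huv).1 ⟨hu, hv⟩⟩

theorem reachesIn_zero (u : ℕ) : G.ReachesIn 0 u u :=
  ⟨fun _ => u, rfl, rfl, by simp⟩

theorem Adj.reachesIn_one {u v : ℕ} (h : G.Adj u v) : G.ReachesIn 1 u v :=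
  ⟨fun i => if i = 0 then u else v, rfl, rfl, by simpa using h⟩

theorem ReachesIn.trans {m n u v w : ℕ} (h₁ : G.ReachesIn m u v) (h₂ : G.ReachesIn n v w) :
    G.ReachesIn (m + n) u w := by
  obtain ⟨f, rfl, rfl, hf⟩ := h₁
  obtain ⟨g, hg0, rfl, hg⟩ := h₂
  refine ⟨fun i => if i ≤ m then f i else g (i - m), by simp, ?_, fun i hi => ?_⟩
  · rcases Nat.eq_zero_or_pos n with rfl | hn
    · simp [hg0]
    · simp [show ¬ m + n ≤ m by omega]
  · rcases Nat.lt_or_ge i m with him | him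
    · simpa [him.le, Nat.succ_le_of_lt him] using hf i him
    · have hgi := hg (i - m) (by omega)
      rw [show i - m + 1 = i + 1 - m by omega] at hgi
      rcases him.eq_or_lt with rfl | him
      · simpa [hg0] using hgi
      · simpa [show ¬ i ≤ m by omega, show ¬ i + 1 ≤ m by omega] using hgi

theorem ReachesIn.symm {n u v : ℕ} (h : G.ReachesIn n u v) : G.ReachesIn n v u := by
  obtain ⟨f, rfl, rfl, hf⟩ := h
  refine ⟨fun i => f (n - i), by simp, by simp, fun i hi => ?_⟩
  have := (hf (n - (i + 1)) (by omega)).symm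
  rwa [show n - (i + 1) + 1 = n - i by omega] at this

theorem connected_of_forall_reachesIn (b : ℕ) (h : ∀ v, ∃ n, G.ReachesIn n b v) :
    G.Connected := fun u v =>
  let ⟨_, hu⟩ := h u
  let ⟨_, hv⟩ := h v
  ⟨_, hu.symm.trans hv⟩

theorem ReachesIn.le_add_of_lipschitz {n u v : ℕ} (h : G.ReachesIn n u v) (φ : ℕ → ℕ)
    (hφ : ∀ a b, G.Adj a b → φ b ≤ φ a + 1) : φ v ≤ φ u + n := by
  obtain ⟨f, rfl, rfl, hf⟩ := h
  suffices ∀ i ≤ n, φ (f i) ≤ φ (f 0) + i from this n le_rfl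
  intro i hi
  induction i with
  | zero => simp
  | succ i ih =>
    have := hφ _ _ (hf i hi)
    have := ih (by omega)
    omega

theorem ReachesIn.exists_adj_mem_notMem {n u v : ℕ} {S : Set ℕ} (h : G.ReachesIn n u v)
    (hu : u ∈ S) (hv : v ∉ S) : ∃ a b, G.Adj a b ∧ a ∈ S ∧ b ∉ S := by
  obtain ⟨f, rfl, rfl, hf⟩ := h
  by_contra! hS
  suffices ∀ i ≤ n, f i ∈ S from hv (this n le_rfl)
  intro i hi
  induction i with
  | zero => exact hu
  | succ i ih => exact hS _ _ (hf i hi) (ih (by omega))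

theorem dist_le {n u v : ℕ} (h : G.ReachesIn n u v) : G.dist u v ≤ n :=
  Nat.sInf_le h

theorem reachesIn_dist (hG : G.Connected) (u v : ℕ) : G.ReachesIn (G.dist u v) u v :=
  Nat.sInf_mem (hG u v)

theorem dist_self (u : ℕ) : G.dist u u = 0 :=
  Nat.le_zero.1 (dist_le (reachesIn_zero u))

theorem dist_le_dist_add_one (hG : G.Connected) (b : ℕ) {u v : ℕ} (h : G.Adj u v) :
    G.dist b v ≤ G.dist b u + 1 :=
  dist_le ((reachesIn_dist hG b u).trans h.reachesIn_one)

theorem base_mem_ballV (r : ℕ) : G.base ∈ G.ballV r := by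
  simp [ballV, dist_self]

theorem ballV_mono {r r' : ℕ} (h : r ≤ r') : G.ballV r ⊆ G.ballV r' :=
  fun _ hv => le_trans hv h

theorem ballE_mono {r r' : ℕ} (h : r ≤ r') : G.ballE r ⊆ G.ballE r' :=
  fun _ he v hv => ballV_mono h (he v hv)

theorem LocallyFinite.finite_setOf_adj (hlf : G.LocallyFinite) (u : ℕ) : {v | G.Adj u v}.Finite :=
  ((hlf u).biUnion fun e _ => (G.edges e).finite_setOf_mem).subset
    fun v ⟨e, he⟩ => Set.mem_biUnion (x := e) (by simp [he]) (by simp [he])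

theorem ballV_succ_subset (hG : G.Connected) (r : ℕ) :
    G.ballV (r + 1) ⊆ G.ballV r ∪ ⋃ u ∈ G.ballV r, {v | G.Adj u v} := by
  intro v hv
  rcases (Nat.lt_or_ge (G.dist G.base v) (r + 1)) with hlt | hge
  · exact Or.inl (Nat.lt_succ_iff.1 hlt)
  · obtain ⟨f, hf0, hfv, hf⟩ := reachesIn_dist hG G.base v
    rw [le_antisymm hv hge] at hfv hf
    refine Or.inr (Set.mem_biUnion (x := f r) ?_ ?_)
    · exact dist_le ⟨f, hf0, rfl, fun i hi => hf i (by omega)⟩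
    · simpa [hfv] using hf r (by omega)

theorem ballV_finite (hG : G.Connected) (hlf : G.LocallyFinite) (r : ℕ) : (G.ballV r).Finite := by
  induction r with
  | zero =>
    refine (Set.finite_singleton G.base).subset fun v hv => ?_
    obtain ⟨f, hf0, hfv, -⟩ := reachesIn_dist hG G.base v
    rw [Nat.le_zero.1 hv] at hfv
    simp [← hfv, hf0]
  | succ r ih =>
    exact (ih.union (ih.biUnion fun u _ => hlf.finite_setOf_adj u)).subset (ballV_succ_subset hG r)

theorem finite_and_degree_eq_three {v : ℕ}
    (hinc : ∃ a b c, {e | v ∈ G.edges e} = {a, b, c} ∧ a ≠ b ∧ a ≠ c ∧ b ≠ c)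
    (hloop : ∀ e, G.edges e ≠ s(v, v)) : {e | v ∈ G.edges e}.Finite ∧ G.degree v = 3 := by
  obtain ⟨a, b, c, hinc, hab, hac, hbc⟩ := hinc
  refine ⟨hinc ▸ Set.toFinite _, ?_⟩
  simp only [degree, hloop, Set.ofPred_false, Set.ncard_empty, add_zero, hinc]
  exact Set.ncard_eq_three.2 ⟨a, b, c, hab, hac, hbc, rfl⟩

def meetsBall (G : BasedGraph) (R : ℕ) : Set ℕ := {e | ∃ u ∈ G.edges e, u ∈ G.ballV R}

def boundary (G : BasedGraph) (R : ℕ) : Set ℕ := {e | e ∈ G.meetsBall R ∧ e ∉ G.ballE R}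

theorem exists_notMem_ballV_of_mem_boundary {e : ℕ} (he : e ∈ G.boundary R) :
    ∃ w ∈ G.edges e, w ∉ G.ballV R := by
  by_contra! h
  exact he.2 h

theorem boundary_nonempty (hG : G.Connected) (hlf : G.LocallyFinite) (R : ℕ) :
    (G.boundary R).Nonempty := by
  obtain ⟨w, hw⟩ := (ballV_finite hG hlf R).infinite_compl.nonempty
  obtain ⟨n, hn⟩ := hG G.base w
  obtain ⟨a, b, ⟨e, he⟩, ha, hb⟩ := hn.exists_adj_mem_notMem (base_mem_ballV R) hw
  exact ⟨e, ⟨a, he ▸ Sym2.mem_mk_left a b, ha⟩, fun h => hb (h b (he ▸ Sym2.mem_mk_right a b))⟩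

theorem meetsBall_finite (hG : G.Connected) (hlf : G.LocallyFinite) (R : ℕ) :
    (G.meetsBall R).Finite :=
  ((ballV_finite hG hlf R).biUnion fun u _ => hlf u).subset
    fun _ ⟨_, hu, huB⟩ => Set.mem_biUnion huB hu

theorem ballIso_of_eq {G₁ G₂ : BasedGraph} {r : ℕ} (hbase : G₁.base = G₂.base)
    (hV : G₁.ballV r = G₂.ballV r) (hE : G₁.ballE r = G₂.ballE r)
    (hedges : ∀ e ∈ G₁.ballE r, G₁.edges e = G₂.edges e) : BallIso r G₁ G₂ :=
  ⟨Equiv.setCongr hV, Equiv.setCongr hE, fun _ => hbase,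
    fun e _ _ _ _ h => (hedges e e.2).symm.trans h⟩

theorem BallIso.refl (r : ℕ) (G : BasedGraph) : BallIso r G G :=
  ballIso_of_eq rfl rfl rfl fun _ _ => rfl

theorem BallIso.trans {G₁ G₂ G₃ : BasedGraph} {r : ℕ} (h₁ : BallIso r G₁ G₂)
    (h₂ : BallIso r G₂ G₃) : BallIso r G₁ G₃ := by
  obtain ⟨σ₁, τ₁, hb₁, he₁⟩ := h₁
  obtain ⟨σ₂, τ₂, hb₂, he₂⟩ := h₂
  refine ⟨σ₁.trans σ₂, τ₁.trans τ₂, fun hb => ?_, fun e u v hu hv h => ?_⟩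
  · have : σ₁ ⟨G₁.base, hb⟩ = ⟨G₂.base, hb₁ hb ▸ (σ₁ ⟨G₁.base, hb⟩).2⟩ := Subtype.ext (hb₁ hb)
    simpa only [Equiv.trans_apply, this] using hb₂ _
  · simpa using he₂ (τ₁ e) _ _ (σ₁ ⟨u, hu⟩).2 (σ₁ ⟨v, hv⟩).2 (he₁ e u v hu hv h)

theorem BallIso.rankGe {G₁ G₂ : BasedGraph} {r n : ℕ} (h : BallIso r G₁ G₂) {VF EF : Finset ℕ}
    (hVF : ∀ v ∈ VF, v ∈ G₁.ballV r) (hEF : ∀ e ∈ EF, ∀ v ∈ G₁.edges e, v ∈ VF)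
    (hcard : VF.card + n ≤ EF.card + 1) : RankGe G₂ Set.univ n := by
  classical
  obtain ⟨σ, τ, -, hedge⟩ := h
  have hEFball : ∀ e ∈ EF, e ∈ G₁.ballE r := fun e he v hv => hVF _ (hEF e he v hv)
  let σ' : VF → ℕ := fun x => σ ⟨x, hVF _ x.2⟩
  let τ' : EF → ℕ := fun x => τ ⟨x, hEFball _ x.2⟩
  have hσ' : σ'.Injective := fun x y hxy =>
    Subtype.ext (Subtype.mk.inj (σ.injective (Subtype.ext hxy)))
  have hτ' : τ'.Injective := fun x y hxy =>
    Subtype.ext (Subtype.mk.inj (τ.injective (Subtype.ext hxy)))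
  refine ⟨VF.attach.image σ', EF.attach.image τ', by simp, ?_, ?_⟩
  · simp only [Finset.mem_image, Finset.mem_attach, true_and, forall_exists_index]
    rintro _ ⟨e, he⟩ rfl w hw
    induction hab : G₁.edges e using Sym2.ind with | _ a b => ?_
    have ha := hEF e he a (by simp [hab])
    have hb := hEF e he b (by simp [hab])
    rw [hedge ⟨e, hEFball e he⟩ a b (hVF a ha) (hVF b hb) hab, Sym2.mem_iff] at hw
    rcases hw with rfl | rfl
    exacts [⟨⟨a, ha⟩, rfl⟩, ⟨⟨b, hb⟩, rfl⟩]
  · rwa [Finset.card_image_of_injective _ hσ', Finset.card_image_of_injective _ hτ',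
      Finset.card_attach, Finset.card_attach]

theorem bddBelow_gdist (G₁ G₂ : BasedGraph) :
    BddBelow (insert 1 {x : ℝ | ∃ r, BallIso r G₁ G₂ ∧ x = (2 : ℝ)⁻¹ ^ r}) := by
  refine ⟨0, ?_⟩
  rintro x (rfl | ⟨r, -, rfl⟩) <;> positivity

theorem gdist_le_one (G₁ G₂ : BasedGraph) : gdist G₁ G₂ ≤ 1 :=
  csInf_le (bddBelow_gdist G₁ G₂) (Set.mem_insert 1 _)

theorem gdist_le_of_ballIso {G₁ G₂ : BasedGraph} {r : ℕ} (h : BallIso r G₁ G₂) :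
    gdist G₁ G₂ ≤ (2 : ℝ)⁻¹ ^ r :=
  csInf_le (bddBelow_gdist G₁ G₂) (Set.mem_insert_of_mem _ ⟨r, h, rfl⟩)

theorem exists_ballIso_of_gdist_lt {G₁ G₂ : BasedGraph} {ε : ℝ} (h : gdist G₁ G₂ < ε) :
    1 < ε ∨ ∃ r, BallIso r G₁ G₂ ∧ (2 : ℝ)⁻¹ ^ r < ε := by
  obtain ⟨x, hx, hxε⟩ := exists_lt_of_csInf_lt (Set.insert_nonempty _ _) h
  rcases hx with rfl | ⟨r, hr, rfl⟩
  exacts [Or.inl hxε, Or.inr ⟨r, hr, hxε⟩]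

structure ExtendsBall (G Δ : BasedGraph) (R : ℕ) : Prop where
  base_eq : Δ.base = G.base
  edges_eq : ∀ e ∈ G.ballE R, Δ.edges e = G.edges e
  exists_notMem_ballV : ∀ e ∉ G.ballE R, ∃ w ∈ Δ.edges e, w ∉ G.ballV R
  le_dist_of_mem : ∀ e ∉ G.ballE R, ∀ u ∈ Δ.edges e, u ∈ G.ballV R → R ≤ G.dist G.base u

namespace ExtendsBall

theorem reachesIn (h : ExtendsBall G Δ R) (hG : G.Connected) {v : ℕ} (hv : v ∈ G.ballV R) :
    Δ.ReachesIn (G.dist G.base v) Δ.base v := by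
  obtain ⟨f, hf0, hfv, hf⟩ := reachesIn_dist hG G.base v
  refine ⟨f, hf0.trans h.base_eq.symm, hfv, fun i hi => ?_⟩
  obtain ⟨e, he⟩ := hf i hi
  have hvR : G.dist G.base v ≤ R := hv
  have hball : ∀ j ≤ i + 1, f j ∈ G.ballV R := fun j hj =>
    (dist_le ⟨f, hf0, rfl, fun k hk => hf k (by omega)⟩).trans (by omega)
  refine ⟨e, (h.edges_eq e fun w hw => ?_).trans he⟩
  rcases Sym2.mem_iff.1 (he ▸ hw) with rfl | rfl
  exacts [hball i (by omega), hball (i + 1) le_rfl]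

theorem le_dist (h : ExtendsBall G Δ R) (hG : G.Connected) (hΔ : Δ.Connected) (v : ℕ) :
    (v ∈ G.ballV R → G.dist G.base v ≤ Δ.dist Δ.base v) ∧
      (v ∉ G.ballV R → R < Δ.dist Δ.base v) := by
  classical
  -- `φ` is `1`-Lipschitz along the edges of `Δ`, so it bounds the distance from the base.
  set φ : ℕ → ℕ := fun v => if v ∈ G.ballV R then G.dist G.base v else R + 1
  have hφ : ∀ a b, Δ.Adj a b → φ b ≤ φ a + 1 := by
    rintro a b ⟨e, he⟩
    by_cases heR : e ∈ G.ballE R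
    · have hG' := h.edges_eq e heR ▸ he
      have ha : a ∈ G.ballV R := heR a (by simp [hG'])
      have hb : b ∈ G.ballV R := heR b (by simp [hG'])
      simpa [φ, ha, hb] using dist_le_dist_add_one hG G.base ⟨e, hG'⟩
    · obtain ⟨w, hw, hwR⟩ := h.exists_notMem_ballV e heR
      have hrim := h.le_dist_of_mem e heR
      rw [he] at hw hrim
      by_cases ha : a ∈ G.ballV R <;> by_cases hb : b ∈ G.ballV R
      · rcases Sym2.mem_iff.1 hw with rfl | rfl <;> contradiction
      · simpa [φ, ha, hb] using hrim a (by simp) ha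
      · simpa [φ, ha, hb] using le_trans hb (by omega)
      · simp [φ, ha, hb]
  have hv := (reachesIn_dist hΔ Δ.base v).le_add_of_lipschitz φ hφ
  have h0 : φ Δ.base = 0 := by simp [φ, h.base_eq, base_mem_ballV, dist_self]
  rw [h0, zero_add] at hv
  constructor <;> intro hvR <;> simp [φ, hvR] at hv <;> omega

theorem ballV_eq (h : ExtendsBall G Δ R) (hG : G.Connected) (hΔ : Δ.Connected) {r : ℕ}
    (hr : r ≤ R) : Δ.ballV r = G.ballV r := by
  ext v
  by_cases hv : v ∈ G.ballV R
  · have hle := dist_le (h.reachesIn hG hv)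
    have hge := (h.le_dist hG hΔ v).1 hv
    change Δ.dist Δ.base v ≤ r ↔ G.dist G.base v ≤ r
    omega
  · have hlt := (h.le_dist hG hΔ v).2 hv
    exact iff_of_false (fun hv' : Δ.dist Δ.base v ≤ r => by omega)
      fun hv' => hv (ballV_mono hr hv')

theorem ballE_eq (h : ExtendsBall G Δ R) (hG : G.Connected) (hΔ : Δ.Connected) {r : ℕ}
    (hr : r ≤ R) : Δ.ballE r = G.ballE r := by
  ext e
  simp only [ballE, Set.mem_ofPred_eq, h.ballV_eq hG hΔ hr]
  by_cases he : e ∈ G.ballE R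
  · rw [h.edges_eq e he]
  · obtain ⟨w, hw, hwR⟩ := h.exists_notMem_ballV e he
    exact iff_of_false (fun h' => hwR (ballV_mono hr (h' w hw)))
      fun h' => he (ballE_mono hr h')

theorem ballIso (h : ExtendsBall G Δ R) (hG : G.Connected) (hΔ : Δ.Connected) {r : ℕ}
    (hr : r ≤ R) : BallIso r G Δ :=
  ballIso_of_eq h.base_eq.symm (h.ballV_eq hG hΔ hr).symm (h.ballE_eq hG hΔ hr).symm
    fun e he => (h.edges_eq e (ballE_mono hr he)).symm

theorem edges_eq_diag_iff (h : ExtendsBall G Δ R) {v e : ℕ} (hv : v ∈ G.ballV R) :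
    Δ.edges e = s(v, v) ↔ G.edges e = s(v, v) := by
  by_cases he : e ∈ G.ballE R
  · rw [h.edges_eq e he]
  · obtain ⟨w, hw, hwR⟩ := h.exists_notMem_ballV e he
    refine iff_of_false (fun hΔv => hwR ?_) fun hGv => he fun u hu => ?_
    · rw [hΔv, Sym2.mem_iff, or_self] at hw
      exact hw ▸ hv
    · rw [hGv, Sym2.mem_iff, or_self] at hu
      exact hu ▸ hv

end ExtendsBall

/-- Edge `t` of an infinite ray on the vertices `ℕ` in which `2p, 2p + 1` are joined by a double
edge (`t = 3p, 3p + 1`) and `2p + 1, 2p + 2` by a single one (`t = 3p + 2`): every vertex but `0`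
has degree `3`, and every double edge is a cycle. -/
def rayEdge (t : ℕ) : Sym2 ℕ :=
  s(2 * (t / 3) + t % 3 / 2, 2 * (t / 3) + t % 3 / 2 + 1)

theorem mem_rayEdge {j t : ℕ} :
    j ∈ rayEdge t ↔ j = 2 * (t / 3) + t % 3 / 2 ∨ j = 2 * (t / 3) + t % 3 / 2 + 1 :=
  Sym2.mem_iff

theorem zero_mem_rayEdge {t : ℕ} : 0 ∈ rayEdge t ↔ t = 0 ∨ t = 1 := by
  rw [mem_rayEdge]
  omega

theorem succ_mem_rayEdge {j t : ℕ} :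
    j + 1 ∈ rayEdge t ↔
      t = 3 * (j / 2) + 2 * (j % 2) ∨ t = 3 * (j / 2) + 2 * (j % 2) + 1 ∨
        t = 3 * (j / 2) + 2 * (j % 2) + 2 := by
  rw [mem_rayEdge]
  omega

theorem exists_rayEdge_eq (j : ℕ) : ∃ t, rayEdge t = s(j, j + 1) :=
  ⟨3 * (j / 2) + 2 * (j % 2), by
    rw [rayEdge, show 2 * ((3 * (j / 2) + 2 * (j % 2)) / 3) + (3 * (j / 2) + 2 * (j % 2)) % 3 / 2
      = j by omega]⟩

theorem rankGe_of_rayEdge {f g : ℕ → ℕ} (hf : f.Injective) (hg : g.Injective)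
    (hfg : ∀ t, G.edges (g t) = (rayEdge t).map f) (n : ℕ) : RankGe G Set.univ n := by
  refine ⟨(Finset.range (2 * n + 2)).image f, (Finset.range (3 * n + 2)).image g,
    Set.subset_univ _, ?_, ?_⟩
  · simp only [Finset.mem_image, Finset.mem_range, forall_exists_index, and_imp]
    rintro _ t ht rfl v hv
    obtain ⟨j, hj, rfl⟩ := Sym2.mem_map.1 (hfg t ▸ hv)
    exact ⟨j, by rw [mem_rayEdge] at hj; omega, rfl⟩
  · rw [Finset.card_image_of_injective _ hf, Finset.card_image_of_injective _ hg,
      Finset.card_range, Finset.card_range]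
    omega

section Splice

-- `α` and `β` label the vertices outside the ball and the edges not meeting it as the vertices
-- and edges of one ray per boundary edge.
variable (α : ↥(G.ballV R)ᶜ ≃ ↥(G.boundary R) × ℕ) (β : ↥(G.meetsBall R)ᶜ ≃ ↥(G.boundary R) × ℕ)

def rayVertex (h : G.boundary R) (j : ℕ) : ℕ := α.symm (h, j)

def rayEdgeIndex (h : G.boundary R) (t : ℕ) : ℕ := β.symm (h, t)

open Classical in
noncomputable def redirect (e x : ℕ) : ℕ :=
  if x ∈ G.ballV R then x else if he : e ∈ G.boundary R then rayVertex α ⟨e, he⟩ 0 else x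

open Classical in
/-- The edges meeting the ball are kept, with the outer end of each boundary edge `h` moved to
`rayVertex α h 0`; all other edges are used for the rays. -/
noncomputable def splice : BasedGraph where
  edges e :=
    if he : e ∈ G.meetsBall R then (G.edges e).map (redirect α e)
    else (rayEdge (β ⟨e, he⟩).2).map (rayVertex α (β ⟨e, he⟩).1)
  base := G.base

theorem redirect_of_mem {e x : ℕ} (hx : x ∈ G.ballV R) : redirect α e x = x := by
  simp [redirect, hx]

theorem redirect_of_notMem {e x : ℕ} (he : e ∈ G.boundary R) (hx : x ∉ G.ballV R) :
    redirect α e x = rayVertex α ⟨e, he⟩ 0 := by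
  simp [redirect, hx, he]

theorem rayVertex_notMem_ballV (h : G.boundary R) (j : ℕ) : rayVertex α h j ∉ G.ballV R :=
  (α.symm (h, j)).2

theorem rayVertex_inj {h h' : G.boundary R} {j j' : ℕ} :
    rayVertex α h j = rayVertex α h' j' ↔ h = h' ∧ j = j' := by
  simp [rayVertex, Subtype.ext_iff.symm, Prod.ext_iff]

theorem exists_eq_rayVertex {v : ℕ} (hv : v ∉ G.ballV R) : ∃ h j, v = rayVertex α h j :=
  ⟨(α ⟨v, hv⟩).1, (α ⟨v, hv⟩).2, by simp [rayVertex]⟩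

theorem rayEdgeIndex_notMem_meetsBall (h : G.boundary R) (t : ℕ) :
    rayEdgeIndex β h t ∉ G.meetsBall R :=
  (β.symm (h, t)).2

theorem rayEdgeIndex_inj {h h' : G.boundary R} {t t' : ℕ} :
    rayEdgeIndex β h t = rayEdgeIndex β h' t' ↔ h = h' ∧ t = t' := by
  simp [rayEdgeIndex, Subtype.ext_iff.symm, Prod.ext_iff]

theorem exists_eq_rayEdgeIndex {e : ℕ} (he : e ∉ G.meetsBall R) : ∃ h t, e = rayEdgeIndex β h t :=
  ⟨(β ⟨e, he⟩).1, (β ⟨e, he⟩).2, by simp [rayEdgeIndex]⟩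

theorem splice_edges_of_mem {e : ℕ} (he : e ∈ G.meetsBall R) :
    (splice α β).edges e = (G.edges e).map (redirect α e) :=
  dif_pos he

theorem splice_edges_rayEdgeIndex (h : G.boundary R) (t : ℕ) :
    (splice α β).edges (rayEdgeIndex β h t) = (rayEdge t).map (rayVertex α h) := by
  simp only [splice, rayEdgeIndex_notMem_meetsBall, dite_false]
  simp [rayEdgeIndex]

theorem mem_splice_edges_of_mem_ballV {v e : ℕ} (hv : v ∈ G.ballV R) :
    v ∈ (splice α β).edges e ↔ v ∈ G.edges e := by
  by_cases he : e ∈ G.meetsBall R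
  · rw [splice_edges_of_mem α β he, Sym2.mem_map]
    refine ⟨fun ⟨x, hx, hxv⟩ => ?_, fun hvG => ⟨v, hvG, redirect_of_mem α hv⟩⟩
    by_cases hxB : x ∈ G.ballV R
    · rwa [← hxv, redirect_of_mem α hxB]
    · rw [redirect_of_notMem α ⟨he, fun h => hxB (h x hx)⟩ hxB] at hxv
      exact absurd (hxv ▸ hv) (rayVertex_notMem_ballV α _ 0)
  · obtain ⟨h, t, rfl⟩ := exists_eq_rayEdgeIndex β he
    rw [splice_edges_rayEdgeIndex, Sym2.mem_map]
    exact iff_of_false (fun ⟨j, _, hj⟩ => rayVertex_notMem_ballV α h j (hj ▸ hv))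
      fun hvG => he ⟨v, hvG, hv⟩

theorem rayVertex_mem_splice_edges {h : G.boundary R} {j e : ℕ} :
    rayVertex α h j ∈ (splice α β).edges e ↔
      (j = 0 ∧ e = h) ∨ ∃ t, rayEdgeIndex β h t = e ∧ j ∈ rayEdge t := by
  by_cases he : e ∈ G.meetsBall R
  · have hne : ∀ t, rayEdgeIndex β h t ≠ e := fun t ht =>
      rayEdgeIndex_notMem_meetsBall β h t (ht ▸ he)
    simp only [splice_edges_of_mem α β he, Sym2.mem_map, hne, false_and, exists_false, or_false]
    constructor
    · rintro ⟨x, hx, hxv⟩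
      have hxB : x ∉ G.ballV R := fun hxB =>
        rayVertex_notMem_ballV α h j (hxv ▸ (redirect_of_mem α hxB).symm ▸ hxB)
      rw [redirect_of_notMem α ⟨he, fun h' => hxB (h' x hx)⟩ hxB, rayVertex_inj] at hxv
      exact ⟨hxv.2.symm, congrArg Subtype.val hxv.1⟩
    · rintro ⟨rfl, rfl⟩
      obtain ⟨w, hw, hwB⟩ := exists_notMem_ballV_of_mem_boundary h.2
      exact ⟨w, hw, redirect_of_notMem α h.2 hwB⟩
  · obtain ⟨h', t, rfl⟩ := exists_eq_rayEdgeIndex β he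
    have hne : rayEdgeIndex β h' t ≠ h := fun heq =>
      rayEdgeIndex_notMem_meetsBall β h' t (heq ▸ h.2.1)
    simp only [splice_edges_rayEdgeIndex, Sym2.mem_map, rayVertex_inj, rayEdgeIndex_inj, hne,
      and_false, false_or]
    constructor
    · rintro ⟨a, ha, rfl, rfl⟩
      exact ⟨t, ⟨rfl, rfl⟩, ha⟩
    · rintro ⟨_, ⟨rfl, rfl⟩, hj⟩
      exact ⟨j, hj, rfl, rfl⟩

theorem extendsBall_splice (hG : G.Connected) : ExtendsBall G (splice α β) R where
  base_eq := rfl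
  edges_eq e he := by
    obtain ⟨u, hu⟩ : ∃ u, u ∈ G.edges e := ⟨_, Sym2.out_fst_mem _⟩
    rw [splice_edges_of_mem α β ⟨u, hu, he u hu⟩,
      Sym2.map_congr fun x hx => redirect_of_mem α (he x hx), Sym2.map_id', id]
  exists_notMem_ballV e he := by
    by_cases hm : e ∈ G.meetsBall R
    · exact ⟨_, (rayVertex_mem_splice_edges α β (h := ⟨e, hm, he⟩)).2 (Or.inl ⟨rfl, rfl⟩),
        rayVertex_notMem_ballV α _ 0⟩
    · obtain ⟨h, t, rfl⟩ := exists_eq_rayEdgeIndex β hm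
      exact ⟨_, (rayVertex_mem_splice_edges α β).2 (Or.inr ⟨t, rfl, Sym2.mem_mk_left _ _⟩),
        rayVertex_notMem_ballV α h _⟩
  le_dist_of_mem e he u hu huB := by
    rw [mem_splice_edges_of_mem_ballV α β huB] at hu
    obtain ⟨w, hw, hwB⟩ := exists_notMem_ballV_of_mem_boundary ⟨⟨u, hu, huB⟩, he⟩
    have hd := dist_le_dist_add_one hG G.base (adj_of_mem_edges hu hw fun huw => hwB (huw ▸ huB))
    have hwR : ¬ G.dist G.base w ≤ R := hwB
    omega

theorem reachesIn_rayVertex (hG : G.Connected) (h : G.boundary R) (j : ℕ) :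
    ∃ n, (splice α β).ReachesIn n (splice α β).base (rayVertex α h j) := by
  induction j with
  | zero =>
    obtain ⟨u, hu, huB⟩ := h.2.1
    have hadj : (splice α β).Adj u (rayVertex α h 0) :=
      adj_of_mem_edges ((mem_splice_edges_of_mem_ballV α β huB).2 hu)
        ((rayVertex_mem_splice_edges α β).2 (Or.inl ⟨rfl, rfl⟩))
        fun hu' => rayVertex_notMem_ballV α h 0 (hu' ▸ huB)
    exact ⟨_, ((extendsBall_splice α β hG).reachesIn hG huB).trans hadj.reachesIn_one⟩
  | succ j ih =>
    obtain ⟨n, hn⟩ := ih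
    obtain ⟨t, ht⟩ := exists_rayEdge_eq j
    refine ⟨n + 1, hn.trans (Adj.reachesIn_one ⟨rayEdgeIndex β h t, ?_⟩)⟩
    rw [splice_edges_rayEdgeIndex, ht, Sym2.map_mk]

theorem splice_connected (hG : G.Connected) : (splice α β).Connected := by
  refine connected_of_forall_reachesIn (splice α β).base fun v => ?_
  by_cases hv : v ∈ G.ballV R
  · exact ⟨_, (extendsBall_splice α β hG).reachesIn hG hv⟩
  · obtain ⟨h, j, rfl⟩ := exists_eq_rayVertex α hv
    exact reachesIn_rayVertex α β hG h j

theorem splice_edges_ne_diag_rayVertex (h : G.boundary R) (j e : ℕ) :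
    (splice α β).edges e ≠ s(rayVertex α h j, rayVertex α h j) := by
  intro heq
  rcases (rayVertex_mem_splice_edges α β).1 (heq ▸ Sym2.mem_mk_left _ _) with ⟨-, rfl⟩ | ⟨t, rfl, -⟩
  · obtain ⟨u, hu, huB⟩ := h.2.1
    have hu' := (mem_splice_edges_of_mem_ballV α β huB).2 hu
    rw [heq, Sym2.mem_iff, or_self] at hu'
    exact rayVertex_notMem_ballV α h j (hu' ▸ huB)
  · rw [splice_edges_rayEdgeIndex, rayEdge, Sym2.map_mk, Sym2.eq_iff] at heq
    simp only [rayVertex_inj, true_and] at heq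
    omega

theorem setOf_rayVertex_zero_mem_splice_edges (h : G.boundary R) :
    {e | rayVertex α h 0 ∈ (splice α β).edges e} =
      {(h : ℕ), rayEdgeIndex β h 0, rayEdgeIndex β h 1} := by
  ext e
  simp only [Set.mem_ofPred_eq, rayVertex_mem_splice_edges, zero_mem_rayEdge, true_and,
    Set.mem_insert_iff, Set.mem_singleton_iff]
  constructor
  · rintro (rfl | ⟨t, rfl, rfl | rfl⟩)
    exacts [Or.inl rfl, Or.inr (Or.inl rfl), Or.inr (Or.inr rfl)]
  · rintro (rfl | rfl | rfl)
    exacts [Or.inl rfl, Or.inr ⟨0, rfl, Or.inl rfl⟩, Or.inr ⟨1, rfl, Or.inr rfl⟩]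

theorem setOf_rayVertex_succ_mem_splice_edges (h : G.boundary R) (j : ℕ) :
    {e | rayVertex α h (j + 1) ∈ (splice α β).edges e} =
      {rayEdgeIndex β h (3 * (j / 2) + 2 * (j % 2)),
        rayEdgeIndex β h (3 * (j / 2) + 2 * (j % 2) + 1),
        rayEdgeIndex β h (3 * (j / 2) + 2 * (j % 2) + 2)} := by
  ext e
  simp only [Set.mem_ofPred_eq, rayVertex_mem_splice_edges, succ_mem_rayEdge, Nat.add_one_ne_zero,
    false_and, false_or, Set.mem_insert_iff, Set.mem_singleton_iff]
  constructor
  · rintro ⟨t, rfl, rfl | rfl | rfl⟩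
    exacts [Or.inl rfl, Or.inr (Or.inl rfl), Or.inr (Or.inr rfl)]
  · rintro (rfl | rfl | rfl)
    exacts [⟨_, rfl, Or.inl rfl⟩, ⟨_, rfl, Or.inr (Or.inl rfl)⟩, ⟨_, rfl, Or.inr (Or.inr rfl)⟩]

theorem splice_regular (hG : G.Connected) (hreg : G.Regular 3) : (splice α β).Regular 3 := by
  suffices h : ∀ v, {e | v ∈ (splice α β).edges e}.Finite ∧ (splice α β).degree v = 3 from
    ⟨fun v => (h v).1, fun v => (h v).2⟩
  intro v
  by_cases hv : v ∈ G.ballV R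
  · have hinc : {e | v ∈ (splice α β).edges e} = {e | v ∈ G.edges e} :=
      Set.ext fun e => mem_splice_edges_of_mem_ballV α β hv
    have hloop : {e | (splice α β).edges e = s(v, v)} = {e | G.edges e = s(v, v)} :=
      Set.ext fun e => (extendsBall_splice α β hG).edges_eq_diag_iff hv
    exact ⟨hinc ▸ hreg.1 v, by rw [degree, hinc, hloop]; exact hreg.2 v⟩
  obtain ⟨h, j, rfl⟩ := exists_eq_rayVertex α hv
  have hh : ∀ t, (h : ℕ) ≠ rayEdgeIndex β h t := fun t heq =>
    rayEdgeIndex_notMem_meetsBall β h t (heq ▸ h.2.1)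
  have hne : ∀ {t t'}, t ≠ t' → rayEdgeIndex β h t ≠ rayEdgeIndex β h t' := fun htt' heq =>
    htt' ((rayEdgeIndex_inj β).1 heq).2
  refine finite_and_degree_eq_three ?_ (splice_edges_ne_diag_rayVertex α β h j)
  cases j with
  | zero => exact ⟨_, _, _, setOf_rayVertex_zero_mem_splice_edges α β h, hh 0, hh 1, hne (by omega)⟩
  | succ j =>
    exact ⟨_, _, _, setOf_rayVertex_succ_mem_splice_edges α β h j, hne (by omega),
      hne (by omega), hne (by omega)⟩

end Splice

theorem exists_infinite_rank_forall_ballIso (hG : G.Connected) (hreg : G.Regular 3) (R : ℕ) :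
    ∃ Δ : BasedGraph, Δ.Connected ∧ Δ.Regular 3 ∧ (∀ r ≤ R, BallIso r G Δ) ∧
      ∀ n, RankGe Δ Set.univ n := by
  obtain ⟨h, hh⟩ := boundary_nonempty hG hreg.1 R
  have : Nonempty (G.boundary R) := ⟨⟨h, hh⟩⟩
  have := (ballV_finite hG hreg.1 R).infinite_compl.to_subtype
  have := (meetsBall_finite hG hreg.1 R).infinite_compl.to_subtype
  obtain ⟨α⟩ := nonempty_equiv_prod_nat ↥(G.ballV R)ᶜ ↥(G.boundary R)
  obtain ⟨β⟩ := nonempty_equiv_prod_nat ↥(G.meetsBall R)ᶜ ↥(G.boundary R)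
  have hΔ := splice_connected α β hG
  exact ⟨splice α β, hΔ, splice_regular α β hG hreg,
    fun r hr => (extendsBall_splice α β hG).ballIso hG hΔ hr,
    rankGe_of_rayEdge (fun j j' hj => ((rayVertex_inj α).1 hj).2)
      (fun t t' ht => ((rayEdgeIndex_inj β).1 ht).2) (splice_edges_rayEdgeIndex α β ⟨h, hh⟩)⟩

end BasedGraph

namespace Gspace

variable {k : ℕ}

theorem isOpen_setOf_gdist_lt (Γ : Gspace k) {ε : ℝ} (hε : 0 < ε) :
    IsOpen {Δ : Gspace k | gdist Γ.1 Δ.1 < ε} :=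
  GenerateOpen.basic _ ⟨Γ, ε, hε, rfl⟩

theorem exists_forall_ballIso_mem_of_isOpen {U : Set (Gspace k)} (hU : IsOpen U) {Γ : Gspace k}
    (hΓ : Γ ∈ U) : ∃ R, ∀ Δ : Gspace k, (∀ r ≤ R, BallIso r Γ.1 Δ.1) → Δ ∈ U := by
  induction hU generalizing Γ with
  | basic s hs =>
    obtain ⟨Γ₀, ε, -, rfl⟩ := hs
    rcases exists_ballIso_of_gdist_lt hΓ with hε | ⟨r, hr, hrε⟩
    · exact ⟨0, fun Δ _ => (gdist_le_one _ _).trans_lt hε⟩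
    · exact ⟨r, fun Δ hΔ => (gdist_le_of_ballIso (hr.trans (hΔ r le_rfl))).trans_lt hrε⟩
  | univ => exact ⟨0, fun _ _ => trivial⟩
  | inter s t _ _ ihs iht =>
    obtain ⟨R₁, h₁⟩ := ihs hΓ.1
    obtain ⟨R₂, h₂⟩ := iht hΓ.2
    exact ⟨max R₁ R₂, fun Δ hΔ => ⟨h₁ Δ fun r hr => hΔ r (le_max_of_le_left hr),
      h₂ Δ fun r hr => hΔ r (le_max_of_le_right hr)⟩⟩
  | sUnion S _ ih =>
    obtain ⟨s, hs, hΓs⟩ := hΓ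
    obtain ⟨R, hR⟩ := ih s hs hΓs
    exact ⟨R, fun Δ hΔ => ⟨s, hs, hR Δ hΔ⟩⟩

theorem isOpen_setOf_rankGe (n : ℕ) : IsOpen {Δ : Gspace k | RankGe Δ.1 Set.univ n} := by
  refine isOpen_iff_mem_nhds.2 ?_
  rintro Δ ⟨VF, EF, -, hEF, hcard⟩
  set R := VF.sup (Δ.1.dist Δ.1.base)
  have hVF : ∀ v ∈ VF, v ∈ Δ.1.ballV R := fun v hv => Finset.le_sup (f := Δ.1.dist Δ.1.base) hv
  have hlt : ∀ {r : ℕ}, (2 : ℝ)⁻¹ ^ r < (2 : ℝ)⁻¹ ^ R ↔ R < r :=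
    pow_lt_pow_iff_right_of_lt_one₀ (by norm_num) (by norm_num)
  have hΔ : gdist Δ.1 Δ.1 < 2⁻¹ ^ R :=
    (gdist_le_of_ballIso (BallIso.refl (R + 1) Δ.1)).trans_lt (hlt.2 (Nat.lt_succ_self R))
  refine Filter.mem_of_superset ((isOpen_setOf_gdist_lt Δ (by positivity)).mem_nhds hΔ)
    fun Δ' hΔ' => ?_
  rcases exists_ballIso_of_gdist_lt hΔ' with h1 | ⟨r, hr, hrR⟩
  · exact absurd h1 (not_lt.2 (pow_le_one₀ (by norm_num) (by norm_num)))
  · exact hr.rankGe (fun v hv => ballV_mono (hlt.1 hrR).le (hVF v hv)) hEF hcard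

theorem isGδ_setOf_forall_rankGe :
    IsGδ {Δ : Gspace k | ∀ n, RankGe Δ.1 Set.univ n} := by
  rw [Set.ofPred_forall]
  exact IsGδ.iInter fun n => (isOpen_setOf_rankGe n).isGδ

theorem dense_setOf_forall_rankGe : Dense {Δ : Gspace 3 | ∀ n, RankGe Δ.1 Set.univ n} := by
  refine dense_iff_inter_open.2 fun U hU ⟨Γ, hΓ⟩ => ?_
  obtain ⟨R, hR⟩ := exists_forall_ballIso_mem_of_isOpen hU hΓ
  obtain ⟨Δ, hconn, hreg, hiso, hrank⟩ := exists_infinite_rank_forall_ballIso Γ.2.1 Γ.2.2 R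
  exact ⟨⟨Δ, hconn, hreg⟩, hR _ hiso, hrank⟩

end Gspace

/-- in `𝒢₃`, the set of graphs of infinite rank is a dense `G_δ`. -/
theorem infinite_rank_dense_Gdelta :
    IsGδ {Δ : Gspace 3 | ∀ n : ℕ, RankGe Δ.1 Set.univ n} ∧
    Dense {Δ : Gspace 3 | ∀ n : ℕ, RankGe Δ.1 Set.univ n} :=
  ⟨Gspace.isGδ_setOf_forall_rankGe, Gspace.dense_setOf_forall_rankGe⟩
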